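/- arXiv:1511.08981 — 3 statements merged into one kernel-verified Lean document; each statement's English description precedes it below -/
import Mathlib

section
/- If X is a topological space, Y a metrizable space, and f : X → Y is a pointwise limit of continuous mappings, then f⁻¹(V) is a countable union of functionally closed sets (a functionally F_σ set) for every open V ⊆ Y. -/
/-- A set is functionally closed (a zero set) if it equals `g ⁻¹' {0}` for some continuous
real-valued function `g`. -/
def FunctionallyClosed {X : Type*} [TopologicalSpace X] (F : Set X) : Prop :=
  ∃ g : X → ℝ, Continuous g ∧ F = g ⁻¹' {0}

/-- A set is functionally `F_σ` if it is a countable union of functionally closed sets. -/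
def FunctionallyFSigma {X : Type*} [TopologicalSpace X] (A : Set X) : Prop :=
  ∃ F : ℕ → Set X, (∀ n, FunctionallyClosed (F n)) ∧ A = ⋃ n, F n


open Set Metric Filter

lemma functionallyClosed_iInter_aux {X : Type*} [TopologicalSpace X] (φ : ℕ → X → ℝ)
    (hφ : ∀ n, Continuous (φ n)) :
    ∃ G : X → ℝ, Continuous G ∧ (⋂ n, (φ n) ⁻¹' {0}) = G ⁻¹' {0} := by
  set t : ℕ → X → ℝ := fun n x => (1/2 : ℝ) ^ n * min |φ n x| 1 with ht
  have htnn : ∀ n x, 0 ≤ t n x := fun n x =>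
    mul_nonneg (by positivity) (le_min (abs_nonneg _) one_pos.le)
  have hb : ∀ n x, ‖t n x‖ ≤ (1/2 : ℝ) ^ n := by
    intro n x
    rw [Real.norm_eq_abs, abs_of_nonneg (htnn n x)]
    calc t n x ≤ (1/2:ℝ)^n * 1 := by
          apply mul_le_mul_of_nonneg_left (min_le_right _ _) (by positivity)
      _ = (1/2:ℝ)^n := mul_one _
  have hgeo : Summable (fun n : ℕ => (1/2 : ℝ) ^ n) :=
    summable_geometric_of_lt_one (by norm_num) (by norm_num)
  have hsum : ∀ x, Summable (fun n => t n x) := fun x =>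
    Summable.of_nonneg_of_le (fun n => htnn n x)
      (fun n => by simpa [Real.norm_eq_abs, abs_of_nonneg (htnn n x)] using hb n x) hgeo
  refine ⟨fun x => ∑' n, t n x, ?_, ?_⟩
  · exact continuous_tsum (fun n => by fun_prop) hgeo hb
  · ext x
    simp only [mem_iInter, mem_preimage, mem_singleton_iff]
    constructor
    · intro h
      have : ∀ n, t n x = 0 := by intro n; simp [ht, h n]
      simp [this]
    · intro h n
      by_contra hne
      have h1 : 0 < t n x := by
        have : 0 < |φ n x| := abs_pos.mpr hne
        exact mul_pos (by positivity) (lt_min this one_pos)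
      have := Summable.le_tsum (hsum x) n (fun m _ => htnn m x)
      rw [h] at this
      linarith

/-- If `f : X → Y` (with `Y` metrizable) is a pointwise limit of continuous maps, then the
preimage of every open set is functionally `F_σ`: `B₁(X,Y) ⊆ K₁(X,Y)`. -/
theorem baireOne_subset_K1 {X Y : Type*} [TopologicalSpace X] [TopologicalSpace Y]
    [TopologicalSpace.MetrizableSpace Y] (f : X → Y) (g : ℕ → X → Y)
    (hg : ∀ n, Continuous (g n))
    (hlim : ∀ x, Filter.Tendsto (fun n => g n x) Filter.atTop (nhds (f x))) :
    ∀ V : Set Y, IsOpen V → FunctionallyFSigma (f ⁻¹' V) := by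
  intro V hV
  by_cases hVu : V = Set.univ
  · subst hVu
    exact ⟨fun _ => univ, fun n => ⟨fun _ => 0, continuous_const, by simp⟩, by
      simp [Set.iUnion_const]⟩
  · have hne : Vᶜ.Nonempty := Set.nonempty_compl.mpr hVu
    letI : MetricSpace Y := TopologicalSpace.metrizableSpaceMetric Y
    set h : ℕ → Y → ℝ := fun k y => max (1/(k+1 : ℝ) - infDist y Vᶜ) 0 with hh
    have hhc : ∀ k, Continuous (h k) := fun k => by
      apply Continuous.max _ continuous_const
      exact continuous_const.sub (continuous_infDist_pt _)
    have hE : ∀ k y, h k y = 0 ↔ 1/(k+1 : ℝ) ≤ infDist y Vᶜ := by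
      intro k y
      rw [hh]
      simp only [max_eq_right_iff, sub_nonpos]
    set F : ℕ × ℕ → Set X := fun p => ⋂ n, (g (p.2 + n)) ⁻¹' {y | h p.1 y = 0} with hF
    have hFcl : ∀ p, ∃ G : X → ℝ, Continuous G ∧ F p = G ⁻¹' {0} := by
      intro p
      obtain ⟨G, hGc, hGe⟩ := functionallyClosed_iInter_aux
        (fun n => h p.1 ∘ g (p.2 + n)) (fun n => (hhc p.1).comp (hg _))
      refine ⟨G, hGc, ?_⟩
      rw [hF, ← hGe]
      rfl
    have key : f ⁻¹' V = ⋃ p : ℕ × ℕ, F p := by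
      ext x
      simp only [mem_preimage, mem_iUnion, hF, mem_iInter, mem_setOf_eq, Prod.exists]
      constructor
      · intro hx
        have hnot : f x ∉ Vᶜ := fun h' => h' hx
        have hd : 0 < infDist (f x) Vᶜ :=
          (hV.isClosed_compl.notMem_iff_infDist_pos hne).mp hnot
        obtain ⟨k, hk⟩ := exists_nat_one_div_lt hd
        have htend : Tendsto (fun n => infDist (g n x) Vᶜ) atTop (nhds (infDist (f x) Vᶜ)) :=
          ((continuous_infDist_pt _).tendsto _).comp (hlim x)
        have : ∀ᶠ n in atTop, 1/(k+1:ℝ) < infDist (g n x) Vᶜ :=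
          htend.eventually (eventually_gt_nhds hk)
        obtain ⟨N, hN⟩ := eventually_atTop.mp this
        refine ⟨k, N, fun n => ?_⟩
        exact (hE k _).mpr (le_of_lt (hN _ (Nat.le_add_right N n)))
      · rintro ⟨k, N, hkN⟩
        have hle : ∀ n, 1/(k+1:ℝ) ≤ infDist (g (N + n) x) Vᶜ := fun n => (hE k _).mp (hkN n)
        have htend : Tendsto (fun n => infDist (g (N + n) x) Vᶜ) atTop
            (nhds (infDist (f x) Vᶜ)) := by
          apply ((continuous_infDist_pt _).tendsto _).comp
          exact (hlim x).comp (tendsto_atTop_mono (fun n => Nat.le_add_left n N) tendsto_id)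
        have hge : 1/(k+1:ℝ) ≤ infDist (f x) Vᶜ := ge_of_tendsto' htend hle
        by_contra hxV
        have : infDist (f x) Vᶜ = 0 := infDist_zero_of_mem hxV
        rw [this] at hge
        have : 0 < 1/(k+1:ℝ) := by positivity
        linarith
    let e : ℕ ≃ ℕ × ℕ := (Denumerable.eqv (ℕ × ℕ)).symm
    refine ⟨fun n => F (e n), fun n => hFcl _, ?_⟩
    rw [key]
    exact (e.surjective.iUnion_comp F).symm
end

section
/- Let Y be a first-countable topological space such that every map from [0,1] to Y with F_σ preimages of open sets is a pointwise limit of continuous maps. Then Y is locally almost arcwise connected. -/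
/-!
Suppose local almost arcwise connectedness fails at `y` for the neighbourhood `V`. Along a
countable neighbourhood basis of `y` we find pairs of nonempty open sets `W n false`, `W n true`
shrinking to `y` that no path in `closure V` joins. Put a pair of points `a < b` inside every
triadic interval of `[0,1]`, all of them distinct, and let `f` send the endpoints of level `n` to
points of `W n false`, `W n true` and everything else to `y`. Since these values converge to `y`,
every preimage under `f` of an open set is either cofinite or countable, hence `F_σ`. If continuous
`gₘ → f` pointwise, then for large `m` the path `gₘ` on `[a, b]` runs from `W n false` to
`W n true`, so it leaves `closure V`. By Baire, some `x` outside the countable set of endpoints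
has `gₘ x ∉ closure V` for infinitely many `m`, although `gₘ x → f x = y ∈ interior V`.
-/

open unitInterval

def IsFSigma {X : Type*} [TopologicalSpace X] (A : Set X) : Prop :=
  ∃ F : ℕ → Set X, (∀ n, IsClosed (F n)) ∧ A = ⋃ n, F n

/-- `Y` is locally almost arcwise connected: every neighborhood `V` of a point contains a
neighborhood `U` such that any two nonempty open subsets of `U` can be joined by an arc lying
in the closure of `V`. -/
def LocallyAlmostArcwiseConnected (Y : Type*) [TopologicalSpace Y] : Prop :=
  ∀ y : Y, ∀ V ∈ nhds y, ∃ U ∈ nhds y, U ⊆ V ∧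
    ∀ W₁ W₂ : Set Y, IsOpen W₁ → IsOpen W₂ → W₁.Nonempty → W₂.Nonempty → W₁ ⊆ U → W₂ ⊆ U →
      ∃ γ : I → Y, Continuous γ ∧ γ 0 ∈ W₁ ∧ γ 1 ∈ W₂ ∧ Set.range γ ⊆ closure V

open Set Filter Topology Function

lemma isFSigma_of_isGδ_compl {X : Type*} [TopologicalSpace X] {s : Set X} (h : IsGδ sᶜ) :
    IsFSigma s := by
  obtain ⟨U, hU, hsU⟩ := isGδ_iff_eq_iInter_nat.1 h
  refine ⟨fun n => (U n)ᶜ, fun n => (hU n).isClosed_compl, ?_⟩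
  rw [← compl_iInter, ← hsU, compl_compl]

lemma isFSigma_preimage_extend {X Y α : Type*} [TopologicalSpace X] [T1Space X]
    [PerfectlyNormalSpace X] [TopologicalSpace Y] [Countable α] {c : α → X} (hc : Injective c)
    {z : α → Y} {y : Y} (hz : Tendsto z cofinite (𝓝 y)) {O : Set Y} (hO : IsOpen O) :
    IsFSigma (extend c z (fun _ => y) ⁻¹' O) := by
  apply isFSigma_of_isGδ_compl
  by_cases hy : y ∈ O
  · have hfin : {i | z i ∉ O}.Finite := eventually_cofinite.1 (hz.eventually_mem (hO.mem_nhds hy))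
    refine ((hfin.image c).subset fun x hx => ?_).isClosed.isGδ
    by_cases hxc : ∃ i, c i = x
    · obtain ⟨i, rfl⟩ := hxc
      exact ⟨i, by simpa [hc.extend_apply] using hx, rfl⟩
    · exact absurd (by simpa [extend_apply' _ _ _ hxc] using hy) hx
  · refine ((countable_range c).mono fun x hx => ?_).isGδ_compl
    by_contra hxc
    exact hy (by simpa [extend_apply' _ _ _ hxc] using hx)

lemma tendsto_sigma_fst_cofinite {ι : Type*} {β : ι → Type*} [∀ i, Finite (β i)] :
    Tendsto (Sigma.fst : Sigma β → ι) cofinite cofinite :=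
  .cofinite_of_finite_preimage_singleton fun i => range_sigmaMk i ▸ finite_range _

lemma tendsto_cofinite_sigma_of_tendsto_atTop {β : ℕ → Type*} [∀ n, Finite (β n)] {κ Y : Type*}
    [Finite κ] [TopologicalSpace Y] {w : ℕ → κ → Y} {y : Y}
    (hw : ∀ e, Tendsto (w · e) atTop (𝓝 y)) :
    Tendsto (fun q : Σ n, β n × κ => w q.1 q.2.2) cofinite (𝓝 y) := by
  refine tendsto_iff_forall_eventually_mem.2 fun O hO => ?_
  have hn : ∀ᶠ n in cofinite, ∀ e, w n e ∈ O := by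
    rw [Nat.cofinite_eq_atTop]
    exact eventually_all.2 fun e => (hw e).eventually_mem hO
  exact (tendsto_sigma_fst_cofinite.eventually hn).mono fun q hq => hq q.2.2

lemma Nat.eq_and_eq_of_mul_pow_eq_mul_pow {p a b m n : ℕ} (hp : p.Prime) (ha : ¬p ∣ a)
    (hb : ¬p ∣ b) (h : a * p ^ m = b * p ^ n) : a = b ∧ m = n := by
  have hfac : ∀ {c} k, ¬p ∣ c → (c * p ^ k).factorization p = k := fun k hc => by
    rw [Nat.factorization_mul (by rintro rfl; simp at hc) (pow_ne_zero _ hp.ne_zero)]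
    simp [Nat.factorization_eq_zero_of_not_dvd hc, hp.factorization_self]
  have hmn : m = n := by rw [← hfac m ha, ← hfac n hb, h]
  subst hmn
  exact ⟨Nat.eq_of_mul_eq_mul_right (pow_pos hp.pos m) h, rfl⟩

lemma triadic_mem_unitInterval {n k : ℕ} (hk : k < 3 ^ n) (e : Bool) :
    ((3 * k + 1 + e.toNat : ℕ) : ℝ) / 3 ^ (n + 1) ∈ I := by
  refine ⟨by positivity, div_le_one_of_le₀ ?_ (by positivity)⟩
  have : 3 * k + 1 + e.toNat ≤ 3 ^ (n + 1) := by
    have := Bool.toNat_le e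
    rw [pow_succ]; omega
  exact_mod_cast this

/-- `⟨n, k, e⟩` gives `(3k+1)/3^(n+1)` or `(3k+2)/3^(n+1)`, two interior points of the triadic
interval `[k/3^n, (k+1)/3^n]`. Their numerators are prime to `3`, so all these points differ. -/
noncomputable def triadicPoint (q : Σ n : ℕ, Fin (3 ^ n) × Bool) : I :=
  ⟨_, triadic_mem_unitInterval q.2.1.isLt q.2.2⟩

lemma triadicPoint_injective : Injective triadicPoint := by
  rintro ⟨n, k, e⟩ ⟨n', k', e'⟩ h
  have h' : (3 * k + 1 + e.toNat) * 3 ^ (n' + 1) = (3 * k' + 1 + e'.toNat) * 3 ^ (n + 1) := by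
    have := congrArg Subtype.val h
    simp only [triadicPoint] at this
    rw [div_eq_div_iff (by positivity) (by positivity)] at this
    exact_mod_cast this
  have hndvd : ∀ (j : ℕ) (d : Bool), ¬3 ∣ 3 * j + 1 + d.toNat := by
    intro j d; cases d <;> simp <;> omega
  obtain ⟨hnum, hn⟩ := Nat.eq_and_eq_of_mul_pow_eq_mul_pow Nat.prime_three (hndvd k e)
    (hndvd k' e') h'
  obtain rfl : n = n' := by omega
  have hk : k = k' := by cases e <;> cases e' <;> simp at hnum <;> omega
  have he : e = e' := by cases e <;> cases e' <;> simp at hnum ⊢ <;> omega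
  subst hk he
  rfl

lemma triadicPoint_false_le_true (n : ℕ) (k : Fin (3 ^ n)) :
    triadicPoint ⟨n, k, false⟩ ≤ triadicPoint ⟨n, k, true⟩ := by
  show ((_ : ℕ) : ℝ) / _ ≤ ((_ : ℕ) : ℝ) / _
  gcongr
  simp

lemma exists_triadicPoint_mem_Ioo {u v : ℝ} (hu : 0 ≤ u) (huv : u < v) (hv : v ≤ 1) :
    ∃ n, ∃ k : Fin (3 ^ n),
      u < triadicPoint ⟨n, k, false⟩ ∧ (triadicPoint ⟨n, k, true⟩ : ℝ) < v := by
  obtain ⟨n, hn⟩ := pow_unbounded_of_one_lt (2 / (v - u)) (by norm_num : (1 : ℝ) < 3)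
  have hn' : 2 < (v - u) * 3 ^ n := by rwa [div_lt_iff₀ (sub_pos.2 huv), mul_comm] at hn
  set k := ⌊u * 3 ^ n⌋₊ + 1 with hk
  have hk₁ : u * 3 ^ n < k := by simpa [hk] using Nat.lt_floor_add_one (u * 3 ^ n)
  have hk₂ : (k : ℝ) ≤ u * 3 ^ n + 1 := by simpa [hk] using Nat.floor_le (by positivity)
  have hk₃ : k < 3 ^ n := by exact_mod_cast (by nlinarith : (k : ℝ) < 3 ^ n)
  refine ⟨n, ⟨k, hk₃⟩, ?_, ?_⟩ <;>
    simp only [triadicPoint, Bool.toNat_false, Bool.toNat_true] <;> push_cast <;> rw [pow_succ]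
  · rw [lt_div_iff₀ (by positivity)]; linarith
  · rw [div_lt_iff₀ (by positivity)]; linarith

lemma exists_triadicPoint_Icc_subset {O : Set I} (hO : IsOpen O) (hne : O.Nonempty) :
    ∃ n, ∃ k : Fin (3 ^ n), Icc (triadicPoint ⟨n, k, false⟩) (triadicPoint ⟨n, k, true⟩) ⊆ O := by
  obtain ⟨u, v, huv, hsub⟩ := hO.exists_Ioo_subset hne
  obtain ⟨n, k, hu, hv⟩ := exists_triadicPoint_mem_Ioo u.2.1 huv v.2.2
  exact ⟨n, k, fun x hx => hsub ⟨hu.trans_le hx.1, hx.2.trans_lt hv⟩⟩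

lemma joinedIn_image_Icc {Y : Type*} [TopologicalSpace Y] {g : I → Y} (hg : Continuous g)
    {a b : I} (hab : a ≤ b) : JoinedIn (g '' Icc a b) (g a) (g b) := by
  have hpc : IsPathConnected ((g ∘ projIcc 0 1 zero_le_one) '' Icc (a : ℝ) b) :=
    ((convex_Icc (a : ℝ) b).isPathConnected (nonempty_Icc.2 hab)).image
      (hg.comp continuous_projIcc)
  refine (hpc.joinedIn _ ⟨a, left_mem_Icc.2 hab, by simp⟩ _
    ⟨b, right_mem_Icc.2 hab, by simp⟩).mono ?_
  rintro _ ⟨x, hx, rfl⟩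
  refine ⟨projIcc 0 1 zero_le_one x, ⟨?_, ?_⟩, rfl⟩
  · simpa using monotone_projIcc zero_le_one hx.1
  · simpa using monotone_projIcc zero_le_one hx.2

lemma eventually_exists_mem_Icc_notMem {Y : Type*} [TopologicalSpace Y] {g : ℕ → I → Y}
    (hg : ∀ m, Continuous (g m)) {a b : I} (hab : a ≤ b) {A B C : Set Y}
    (ha : ∀ᶠ m in atTop, g m a ∈ A) (hb : ∀ᶠ m in atTop, g m b ∈ B)
    (hAB : ∀ p ∈ A, ∀ q ∈ B, ¬JoinedIn C p q) :
    ∀ᶠ m in atTop, ∃ x ∈ Icc a b, g m x ∉ C := by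
  filter_upwards [ha, hb] with m hma hmb
  by_contra! hm
  exact hAB _ hma _ hmb ((joinedIn_image_Icc (hg m) hab).mono (image_subset_iff.2 hm))

lemma exists_notMem_range_frequently_notMem {X Y ι : Type*} [TopologicalSpace X] [BaireSpace X]
    [Nonempty X] [T1Space X] [PerfectSpace X] [TopologicalSpace Y] [Countable ι] (c : ι → X)
    {g : ℕ → X → Y} (hg : ∀ m, Continuous (g m)) {C : Set Y} (hC : IsClosed C)
    (h : ∀ O : Set X, IsOpen O → O.Nonempty → ∃ᶠ m in atTop, ∃ x ∈ O, g m x ∉ C) :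
    ∃ x ∉ range c, ∃ᶠ m in atTop, g m x ∉ C := by
  have hc : ∀ᶠ x in residual X, x ∉ range c := by
    have : ∀ᶠ x in residual X, ∀ i, x ∈ ({c i}ᶜ : Set X) :=
      eventually_countable_forall.2 fun i =>
        residual_of_dense_open isOpen_compl_singleton (dense_compl_singleton (c i))
    exact this.mono fun x hx ⟨i, hi⟩ => hx i hi.symm
  have hescape : ∀ᶠ x in residual X, ∀ N, x ∈ ⋃ m ≥ N, g m ⁻¹' Cᶜ := by
    refine eventually_countable_forall.2 fun N => residual_of_dense_open
      (isOpen_biUnion fun m _ => hC.isOpen_compl.preimage (hg m))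
      (dense_iff_inter_open.2 fun O hO hne => ?_)
    obtain ⟨m, hm, x, hxO, hx⟩ := frequently_atTop.1 (h O hO hne) N
    exact ⟨x, hxO, mem_biUnion hm hx⟩
  obtain ⟨t, -, ht, htc⟩ := eventually_residual.1 (hc.and hescape)
  obtain ⟨x, hx⟩ := ht.nonempty
  obtain ⟨hxc, hxC⟩ := htc x hx
  exact ⟨x, hxc, frequently_atTop.2 fun N => by simpa using hxC N⟩

lemma exists_not_joinedIn_of_not_locallyAlmostArcwiseConnected {Y : Type*} [TopologicalSpace Y]
    [FirstCountableTopology Y] (hY : ¬LocallyAlmostArcwiseConnected Y) :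
    ∃ y : Y, ∃ V ∈ 𝓝 y, ∃ (W : ℕ → Bool → Set Y) (w : ℕ → Bool → Y),
      (∀ n e, W n e ∈ 𝓝 (w n e)) ∧ (∀ e, Tendsto (w · e) atTop (𝓝 y)) ∧
      ∀ n, ∀ p ∈ W n false, ∀ q ∈ W n true, ¬JoinedIn (closure V) p q := by
  simp only [LocallyAlmostArcwiseConnected] at hY
  push Not at hY
  obtain ⟨y, V, hV, hbad⟩ := hY
  obtain ⟨s, hs⟩ := (𝓝 y).exists_antitone_basis
  have hW : ∀ n, ∃ W : Bool → Set Y, (∀ e, IsOpen (W e) ∧ (W e).Nonempty ∧ W e ⊆ s n) ∧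
      ∀ p ∈ W false, ∀ q ∈ W true, ¬JoinedIn (closure V) p q := by
    intro n
    obtain ⟨W₁, W₂, hW₁, hW₂, hne₁, hne₂, hsub₁, hsub₂, hno⟩ :=
      hbad (s n ∩ V) (inter_mem (hs.mem n) hV) inter_subset_right
    refine ⟨fun e => cond e W₂ W₁, Bool.forall_bool.2 ⟨⟨hW₁, hne₁, fun x hx => (hsub₁ hx).1⟩,
      ⟨hW₂, hne₂, fun x hx => (hsub₂ hx).1⟩⟩, fun p hp q hq ⟨γ, hγ⟩ => ?_⟩
    exact hno γ γ.continuous (by simpa using hp) (by simpa using hq) (range_subset_iff.2 hγ)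
  choose W hW hWV using hW
  choose w hw using fun n e => (hW n e).2.1
  exact ⟨y, V, hV, W, w, fun n e => (hW n e).1.mem_nhds (hw n e),
    fun e => hs.tendsto fun n => (hW n e).2.2 (hw n e), hWV⟩

/-- If `Y` is first countable and every map `[0,1] → Y` with `F_σ` preimages of open sets is a
pointwise limit of continuous maps, then `Y` is locally almost arcwise connected. -/
theorem locallyAlmostArcwiseConnected_of_H1_subset_B1 {Y : Type*} [TopologicalSpace Y]
    [FirstCountableTopology Y]
    (h : ∀ f : I → Y, (∀ V : Set Y, IsOpen V → IsFSigma (f ⁻¹' V)) →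
      ∃ g : ℕ → I → Y, (∀ n, Continuous (g n)) ∧
        ∀ x : I, Filter.Tendsto (fun n => g n x) Filter.atTop (nhds (f x))) :
    LocallyAlmostArcwiseConnected Y := by
  by_contra hY
  obtain ⟨y, V, hV, W, w, hW, hw, hWV⟩ :=
    exists_not_joinedIn_of_not_locallyAlmostArcwiseConnected hY
  set f : I → Y := extend triadicPoint (fun q => w q.1 q.2.2) fun _ => y
  obtain ⟨g, hg, hgf⟩ := h f fun O hO => isFSigma_preimage_extend triadicPoint_injective
    (tendsto_cofinite_sigma_of_tendsto_atTop hw) hO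
  have hgw : ∀ n k e, Tendsto (g · (triadicPoint ⟨n, k, e⟩)) atTop (𝓝 (w n e)) := fun n k e => by
    simpa [f, triadicPoint_injective.extend_apply] using hgf (triadicPoint ⟨n, k, e⟩)
  have hescape : ∀ O : Set I, IsOpen O → O.Nonempty →
      ∃ᶠ m in atTop, ∃ x ∈ O, g m x ∉ closure V := by
    intro O hO hne
    obtain ⟨n, k, hsub⟩ := exists_triadicPoint_Icc_subset hO hne
    have hIcc := eventually_exists_mem_Icc_notMem hg (triadicPoint_false_le_true n k)
      ((hgw n k false).eventually_mem (hW n false)) ((hgw n k true).eventually_mem (hW n true))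
      (hWV n)
    exact hIcc.frequently.mono fun m ⟨x, hx, hgx⟩ => ⟨x, hsub hx, hgx⟩
  obtain ⟨x, hx, hgx⟩ :=
    exists_notMem_range_frequently_notMem triadicPoint hg isClosed_closure hescape
  have hfx : f x = y := extend_apply' _ _ _ hx
  obtain ⟨m, hm, hmV⟩ := (hgx.and_eventually ((hfx ▸ hgf x).eventually_mem hV)).exists
  exact hm (subset_closure hmV)
end

section
/- The characteristic function of the set E × {0}, where E ⊆ ℝ is not a G_{δσ} set, regarded as a map from the Niemytzki plane X to ℝ, has F_σ preimages of all open subsets of ℝ but its preimage of the open set ℝ∖{0} is not a functionally F_σ subset of X. -/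
/-- The carrier of the Niemytzki plane: the closed upper half-plane. -/
def NPlane : Type := {p : ℝ × ℝ // 0 ≤ p.2}

/-- Euclidean open disk of center `c` and radius `r`, as a subset of the half-plane. -/
def eDisk (c : ℝ × ℝ) (r : ℝ) : Set NPlane :=
  {q | (q.val.1 - c.1)^2 + (q.val.2 - c.2)^2 < r^2}

/-- The Niemytzki topology: interior points get Euclidean disk neighborhoods; a boundary point
`(x,0)` gets neighborhoods `{(x,0)} ∪ D`, where `D` is an open disk tangent to the axis at
`(x,0)`. -/
instance : TopologicalSpace NPlane := TopologicalSpace.generateFrom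
  ({S | ∃ c : ℝ × ℝ, 0 < c.2 ∧ ∃ r : ℝ, 0 < r ∧ r ≤ c.2 ∧ S = eDisk c r} ∪
   {S | ∃ x r : ℝ, 0 < r ∧ S = {q : NPlane | q.val = (x, 0)} ∪ eDisk (x, r) r})

/-- A subset of `ℝ` is `G_δσ` if it is a countable union of `G_δ` sets. -/
def IsGDeltaSigma (E : Set ℝ) : Prop :=
  ∃ F : ℕ → Set ℝ, (∀ n, IsGδ (F n)) ∧ E = ⋃ n, F n

open Set TopologicalSpace

namespace NAux

/-- The generating family of the Niemytzki topology. -/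
abbrev NGen : Set (Set NPlane) :=
  ({S | ∃ c : ℝ × ℝ, 0 < c.2 ∧ ∃ r : ℝ, 0 < r ∧ r ≤ c.2 ∧ S = eDisk c r} ∪
   {S | ∃ x r : ℝ, 0 < r ∧ S = {q : NPlane | q.val = (x, 0)} ∪ eDisk (x, r) r})

lemma isOpen_iff_gen {U : Set NPlane} : IsOpen U ↔ TopologicalSpace.GenerateOpen NGen U :=
  Iff.rfl

lemma isOpen_basic {S : Set NPlane} (h : S ∈ NGen) : IsOpen S :=
  TopologicalSpace.isOpen_generateFrom_of_mem h

/-- auxiliary point constructor -/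
def npt (x y : ℝ) : NPlane := ⟨(x, max y 0), le_max_right y 0⟩

lemma npt_val (x : ℝ) {y : ℝ} (hy : 0 ≤ y) : (npt x y).val = (x, y) := by
  simp [npt, max_eq_left hy]

lemma mem_eDisk {q : NPlane} {c : ℝ × ℝ} {r : ℝ} :
    q ∈ eDisk c r ↔ (q.val.1 - c.1)^2 + (q.val.2 - c.2)^2 < r^2 := Iff.rfl

/-- Every open set containing a boundary point contains a vertical segment above it. -/
lemma vertical_nbhd (x : ℝ) (U : Set NPlane) (hU : IsOpen U) :
    npt x 0 ∈ U → ∃ δ > 0, ∀ t, 0 < t → t < δ → npt x t ∈ U := by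
  have hU' : TopologicalSpace.GenerateOpen NGen U := isOpen_iff_gen.mp hU
  clear hU
  induction hU' with
  | basic S hS =>
    intro hx
    rcases hS with ⟨c, hc, r, hr, hrc, rfl⟩ | ⟨x₀, r, hr, rfl⟩
    · exfalso
      rw [mem_eDisk, npt_val x le_rfl] at hx
      simp only at hx
      nlinarith [sq_nonneg (x - c.1)]
    · rcases hx with hx | hx
      · have hx2 : (npt x 0).val = (x₀, 0) := hx
        rw [npt_val x le_rfl] at hx2
        have hx' : x = x₀ := (Prod.ext_iff.mp hx2).1
        subst hx'
        refine ⟨2 * r, by linarith, fun t ht ht' => ?_⟩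
        right
        rw [mem_eDisk, npt_val x ht.le]
        simp only
        nlinarith
      · exfalso
        rw [mem_eDisk, npt_val x le_rfl] at hx
        simp only at hx
        nlinarith [sq_nonneg (x - x₀)]
  | univ => exact fun _ => ⟨1, one_pos, fun t _ _ => mem_univ _⟩
  | inter S T hS hT ihS ihT =>
    intro hx
    obtain ⟨δ₁, hδ₁, h₁⟩ := ihS hx.1
    obtain ⟨δ₂, hδ₂, h₂⟩ := ihT hx.2
    exact ⟨min δ₁ δ₂, lt_min hδ₁ hδ₂, fun t ht ht' =>
      ⟨h₁ t ht (ht'.trans_le (min_le_left _ _)), h₂ t ht (ht'.trans_le (min_le_right _ _))⟩⟩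
  | sUnion K hK ih =>
    intro hx
    obtain ⟨S, hS, hxS⟩ := hx
    obtain ⟨δ, hδ, h⟩ := ih S hS hxS
    exact ⟨δ, hδ, fun t ht ht' => ⟨S, hS, h t ht ht'⟩⟩

/-- Horizontal embeddings at positive height are continuous. -/
lemma continuous_horiz {t : ℝ} (ht : 0 < t) : Continuous fun x : ℝ => npt x t := by
  refine continuous_generateFrom_iff.mpr ?_
  rintro S (⟨c, hc, r, hr, hrc, rfl⟩ | ⟨x₀, r, hr, rfl⟩)
  · have : (fun x : ℝ => npt x t) ⁻¹' eDisk c r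
        = {x : ℝ | (x - c.1)^2 + (t - c.2)^2 < r^2} := by
      ext x
      simp [mem_eDisk, npt_val x ht.le]
    rw [this]
    exact isOpen_lt (by fun_prop) continuous_const
  · have : (fun x : ℝ => npt x t) ⁻¹' ({q : NPlane | q.val = (x₀, 0)} ∪ eDisk (x₀, r) r)
        = {x : ℝ | (x - x₀)^2 + (t - r)^2 < r^2} := by
      ext x
      simp [mem_eDisk, npt_val x ht.le, Prod.ext_iff, ht.ne']
    rw [this]
    exact isOpen_lt (by fun_prop) continuous_const

/-- The trace on the boundary line of the zero set of any continuous function on the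
Niemytzki plane is a Euclidean `G_δ` set. -/
lemma isGδ_zeroline (g : NPlane → ℝ) (hg : Continuous g) :
    IsGδ {x : ℝ | g (npt x 0) = 0} := by
  have key : {x : ℝ | g (npt x 0) = 0} =
      ⋂ n : ℕ, ⋃ t ∈ Ioo (0:ℝ) (1/(n+1)), {x : ℝ | |g (npt x t)| < 1/(n+1)} := by
    ext x
    simp only [mem_setOf_eq, mem_iInter]
    constructor
    · intro hx n
      have hpos : (0:ℝ) < 1/(n+1) := by positivity
      have hU : IsOpen (g ⁻¹' Metric.ball 0 (1/(n+1))) := Metric.isOpen_ball.preimage hg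
      have hxU : npt x 0 ∈ g ⁻¹' Metric.ball 0 (1/(n+1)) := by
        simp only [Set.mem_preimage, Metric.mem_ball, hx, dist_self]
        exact hpos
      obtain ⟨δ, hδ, hδ'⟩ := vertical_nbhd x _ hU hxU
      set s := min δ (1/(n+1)) / 2 with hs
      have hs0 : 0 < s := by positivity
      have hsδ : s < δ := by
        have := min_le_left δ (1/(n+1)); simp only [hs]; linarith [lt_min hδ hpos]
      have hsn : s < 1/(n+1) := by
        have := min_le_right δ (1/(n+1)); simp only [hs]; linarith [lt_min hδ hpos]
      refine mem_biUnion (mem_Ioo.mpr ⟨hs0, hsn⟩) ?_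
      have := hδ' s hs0 hsδ
      simpa [Metric.mem_ball, Real.dist_eq] using this
    · intro hx
      by_contra hne
      have hε : 0 < |g (npt x 0)| := abs_pos.mpr hne
      have hU : IsOpen (g ⁻¹' Metric.ball (g (npt x 0)) (|g (npt x 0)| / 2)) :=
        Metric.isOpen_ball.preimage hg
      have hxU : npt x 0 ∈ g ⁻¹' Metric.ball (g (npt x 0)) (|g (npt x 0)| / 2) := by
        simp [Metric.mem_ball, hε]
      obtain ⟨δ, hδ, hδ'⟩ := vertical_nbhd x _ hU hxU
      obtain ⟨n, hn⟩ := exists_nat_one_div_lt (lt_min hδ (half_pos hε))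
      obtain ⟨t, htIoo, htx⟩ := mem_iUnion₂.mp (hx n)
      obtain ⟨ht0, htn⟩ := mem_Ioo.mp htIoo
      have htδ : t < δ := htn.trans (hn.trans_le (min_le_left _ _))
      have h1 : |g (npt x t)| < |g (npt x 0)| / 2 := by
        have h2 : |g (npt x t)| < 1/(n+1) := htx
        linarith [hn.trans_le (min_le_right δ (|g (npt x 0)| / 2))]
      have h3 : dist (g (npt x t)) (g (npt x 0)) < |g (npt x 0)| / 2 := hδ' t ht0 htδ
      rw [Real.dist_eq] at h3
      have h4 := abs_sub_abs_le_abs_sub (g (npt x 0)) (g (npt x t))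
      rw [abs_sub_comm] at h4
      linarith
  rw [key]
  exact IsGδ.iInter fun n =>
    (isOpen_biUnion fun t ht =>
      isOpen_lt ((hg.comp (continuous_horiz ht.1)).abs) continuous_const).isGδ

/-- Any set of boundary points is closed in the Niemytzki plane. -/
lemma isClosed_boundary (P : ℝ → Prop) :
    IsClosed {q : NPlane | q.val.2 = 0 ∧ P q.val.1} := by
  rw [← isOpen_compl_iff, isOpen_iff_forall_mem_open]
  intro q hq
  rcases lt_or_eq_of_le q.property with hy | hy
  · refine ⟨eDisk q.val q.val.2, ?_,
      isOpen_basic (Or.inl ⟨q.val, hy, q.val.2, hy, le_rfl, rfl⟩), ?_⟩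
    · intro p hp
      rw [mem_eDisk] at hp
      intro hmem
      rw [hmem.1] at hp
      nlinarith [sq_nonneg (p.val.1 - q.val.1)]
    · rw [mem_eDisk]
      nlinarith
  · have hnP : ¬ P q.val.1 := fun h => hq ⟨hy.symm, h⟩
    refine ⟨{p : NPlane | p.val = (q.val.1, 0)} ∪ eDisk (q.val.1, 1) 1, ?_,
      isOpen_basic (Or.inr ⟨q.val.1, 1, one_pos, rfl⟩), ?_⟩
    · rintro p (hp | hp)
      · intro hmem
        obtain ⟨h2, hP⟩ := hmem
        apply hnP
        have hp' : p.val = (q.val.1, 0) := hp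
        rwa [(Prod.ext_iff.mp hp').1] at hP
      · rw [mem_eDisk] at hp
        simp only at hp
        intro hmem
        obtain ⟨h2, hP⟩ := hmem
        rw [h2] at hp
        nlinarith [sq_nonneg (p.val.1 - q.val.1)]
    · left
      exact Prod.ext rfl hy.symm

/-- The set of points of height at least `ε > 0` is closed in the Niemytzki plane. -/
lemma isClosed_high (ε : ℝ) (hε : 0 < ε) : IsClosed {q : NPlane | ε ≤ q.val.2} := by
  rw [← isOpen_compl_iff, isOpen_iff_forall_mem_open]
  intro q hq
  have hqε : q.val.2 < ε := lt_of_not_ge hq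
  rcases lt_or_eq_of_le q.property with hy | hy
  · refine ⟨eDisk q.val (min q.val.2 (ε - q.val.2)), ?_,
      isOpen_basic (Or.inl ⟨q.val, hy, _, lt_min hy (by linarith), min_le_left _ _, rfl⟩), ?_⟩
    · intro p hp
      rw [mem_eDisk] at hp
      simp only [mem_compl_iff, mem_setOf_eq, not_le]
      nlinarith [sq_nonneg (p.val.1 - q.val.1), min_le_right q.val.2 (ε - q.val.2),
        lt_min hy (show (0:ℝ) < ε - q.val.2 by linarith)]
    · rw [mem_eDisk]
      have := lt_min hy (show (0:ℝ) < ε - q.val.2 by linarith)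
      nlinarith
  · refine ⟨{p : NPlane | p.val = (q.val.1, 0)} ∪ eDisk (q.val.1, ε/2) (ε/2), ?_,
      isOpen_basic (Or.inr ⟨q.val.1, ε/2, by linarith, rfl⟩), ?_⟩
    · rintro p (hp | hp)
      · have hp' : p.val = (q.val.1, 0) := hp
        simp only [mem_compl_iff, mem_setOf_eq, not_le, (Prod.ext_iff.mp hp').2]
        linarith
      · rw [mem_eDisk] at hp
        simp only at hp
        simp only [mem_compl_iff, mem_setOf_eq, not_le]
        nlinarith [sq_nonneg (p.val.1 - q.val.1)]
    · left
      exact Prod.ext rfl hy.symm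

lemma isFSigma_of_isClosed {X : Type*} [TopologicalSpace X] {A : Set X} (h : IsClosed A) :
    IsFSigma A :=
  ⟨fun _ => A, fun _ => h, (iUnion_const A).symm⟩

end NAux

open NAux

/-- For `E ⊆ ℝ` not of type `G_δσ`, the characteristic function of `E × {0}` on the Niemytzki
plane has `F_σ` preimages of all open subsets of `ℝ`, but the preimage of `ℝ \ {0}` is not
functionally `F_σ`: it witnesses `H₁(X,ℝ) \ K₁^w(X,ℝ) ≠ ∅`. -/
theorem niemytzki_example (E : Set ℝ) (hE : ¬ IsGDeltaSigma E) :
    let A : Set NPlane := {q | q.val.1 ∈ E ∧ q.val.2 = 0}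
    let χ : NPlane → ℝ := A.indicator fun _ => (1 : ℝ)
    (∀ V : Set ℝ, IsOpen V → IsFSigma (χ ⁻¹' V)) ∧
      ¬ FunctionallyFSigma (χ ⁻¹' ({(0 : ℝ)}ᶜ)) := by
  intro A χ
  have hχ : ∀ q : NPlane, (q ∈ A ∧ χ q = 1) ∨ (q ∉ A ∧ χ q = 0) := by
    intro q
    by_cases h : q ∈ A
    · exact Or.inl ⟨h, Set.indicator_of_mem h _⟩
    · exact Or.inr ⟨h, Set.indicator_of_notMem h _⟩
  have hAclosed : IsClosed A := by
    have : A = {q : NPlane | q.val.2 = 0 ∧ q.val.1 ∈ E} := by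
      ext q; exact and_comm
    rw [this]
    exact isClosed_boundary _
  have hAcFSigma : IsFSigma Aᶜ := by
    refine ⟨fun n => match n with
      | 0 => {q : NPlane | q.val.2 = 0 ∧ q.val.1 ∉ E}
      | (n+1) => {q : NPlane | 1/((n:ℝ)+1) ≤ q.val.2}, fun n => ?_, ?_⟩
    · match n with
      | 0 =>
        show IsClosed {q : NPlane | q.val.2 = 0 ∧ q.val.1 ∉ E}
        exact isClosed_boundary (fun a => a ∉ E)
      | (n+1) =>
        show IsClosed {q : NPlane | 1/((n:ℝ)+1) ≤ q.val.2}
        exact isClosed_high _ (by positivity)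
    · ext q
      simp only [Set.mem_iUnion, Set.mem_compl_iff]
      constructor
      · intro hq
        rcases lt_or_eq_of_le q.property with hy | hy
        · obtain ⟨n, hn⟩ := exists_nat_one_div_lt hy
          exact ⟨n + 1, show 1/((n:ℝ)+1) ≤ q.val.2 from hn.le⟩
        · exact ⟨0, show q.val.2 = 0 ∧ q.val.1 ∉ E from
            ⟨hy.symm, fun hmem => hq ⟨hmem, hy.symm⟩⟩⟩
      · rintro ⟨n, hn⟩
        match n with
        | 0 =>
          intro hmem
          have hn' : q.val.2 = 0 ∧ q.val.1 ∉ E := hn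
          exact hn'.2 hmem.1
        | (n+1) =>
          intro hmem
          have h0 : (0:ℝ) < 1/((n:ℝ)+1) := by positivity
          have hn' : 1/((n:ℝ)+1) ≤ q.val.2 := hn
          rw [hmem.2] at hn'
          linarith
  constructor
  · intro V _
    by_cases h1 : (1:ℝ) ∈ V <;> by_cases h0 : (0:ℝ) ∈ V
    · have : χ ⁻¹' V = Set.univ := by
        ext q
        simp only [Set.mem_preimage, Set.mem_univ, iff_true]
        rcases hχ q with ⟨_, hq⟩ | ⟨_, hq⟩ <;> rw [hq] <;> assumption
      rw [this]
      exact isFSigma_of_isClosed isClosed_univ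
    · have : χ ⁻¹' V = A := by
        ext q
        rcases hχ q with ⟨hqA, hq⟩ | ⟨hqA, hq⟩ <;>
          simp [Set.mem_preimage, hq, hqA, h0, h1]
      rw [this]
      exact isFSigma_of_isClosed hAclosed
    · have : χ ⁻¹' V = Aᶜ := by
        ext q
        rcases hχ q with ⟨hqA, hq⟩ | ⟨hqA, hq⟩ <;>
          simp [Set.mem_preimage, hq, hqA, h0, h1]
      rw [this]
      exact hAcFSigma
    · have : χ ⁻¹' V = ∅ := by
        ext q
        rcases hχ q with ⟨_, hq⟩ | ⟨_, hq⟩ <;>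
          simp [Set.mem_preimage, hq, h0, h1]
      rw [this]
      exact ⟨fun _ => ∅, fun _ => isClosed_empty, by simp⟩
  · intro hF
    obtain ⟨F, hFc, hFA⟩ := hF
    choose gs hgc hgz using hFc
    apply hE
    refine ⟨fun n => {x : ℝ | gs n (npt x 0) = 0}, fun n => isGδ_zeroline _ (hgc n), ?_⟩
    have hpre : χ ⁻¹' ({(0:ℝ)}ᶜ) = A := by
      ext q
      rcases hχ q with ⟨hqA, hq⟩ | ⟨hqA, hq⟩ <;>
        simp [Set.mem_preimage, hq, hqA]
    rw [hpre] at hFA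
    ext x
    have hval : (npt x 0).val = (x, 0) := npt_val x le_rfl
    have hmemA : x ∈ E ↔ npt x 0 ∈ A := by
      simp [A, Set.mem_setOf_eq, hval]
    rw [hmemA, hFA]
    simp only [Set.mem_iUnion, Set.mem_setOf_eq]
    constructor
    · rintro ⟨n, hn⟩
      rw [hgz n] at hn
      exact ⟨n, hn⟩
    · rintro ⟨n, hn⟩
      exact ⟨n, by rw [hgz n]; exact hn⟩
end
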